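/- Let A be a regular n×n max-plus matrix (n ≥ 1) with maximum cycle mean λ(A), and let x be the orbit of A from x0 : Fin n → ℝ. Then x is a lasso (there exist α ∈ ℝ and k ≥ l ≥ 0 with x (k+1+j) i = α + x (l+j) i for all j ≥ 0 and all i) if and only if x0 admits a local transient and cyclicity (there exist l ≥ 0 and c ≥ 1 with x (j+c) i = λ(A)·c + x j i for all j ≥ l and all i). -/

import Mathlib

/-- `A` is regular: every row contains at least one finite entry. -/
def MPRegular {n : ℕ} (A : Matrix (Fin n) (Fin n) (WithBot ℝ)) : Prop :=
  ∀ i : Fin n, ∃ j : Fin n, A i j ≠ ⊥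

/-- `μ` is the mean of some circuit of the precedence graph of `A`. -/
def IsCycleMean {n : ℕ} (A : Matrix (Fin n) (Fin n) (WithBot ℝ)) (μ : ℝ) : Prop :=
  ∃ m : ℕ, 1 ≤ m ∧ ∃ p : ℕ → Fin n, ∃ w : ℕ → ℝ,
    p m = p 0 ∧ (∀ t < m, A (p (t + 1)) (p t) = ((w t : ℝ) : WithBot ℝ)) ∧
    μ = (∑ t ∈ Finset.range m, w t) / m

/-- `lam` is the maximum cycle mean `λ(A)` of `A`. -/
def IsMaxCycleMean {n : ℕ} (A : Matrix (Fin n) (Fin n) (WithBot ℝ)) (lam : ℝ) : Prop :=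
  IsCycleMean A lam ∧ ∀ μ : ℝ, IsCycleMean A μ → μ ≤ lam

/-- The orbit of a (regular) max-plus matrix `A` from the initial vector
`x0`: `x 0 = x0` and `x (k+1) i = max_j (A i j + x k j)` (for regular `A`
this maximum is a real number, extracted with `WithBot.unbot' 0`). -/
noncomputable def mpOrbit {n : ℕ} (A : Matrix (Fin n) (Fin n) (WithBot ℝ))
    (x0 : Fin n → ℝ) : ℕ → Fin n → ℝ
  | 0 => x0
  | k + 1 => fun i =>
      WithBot.unbotD 0 (Finset.univ.sup fun j => A i j + ((mpOrbit A x0 k j : ℝ) : WithBot ℝ))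

set_option linter.unusedSectionVars false

section Aux

variable {n : ℕ} (hn : 1 ≤ n) (A : Matrix (Fin n) (Fin n) (WithBot ℝ))
  (hA : MPRegular A) (x0 : Fin n → ℝ)

include hn hA

lemma mpOrbit_succ_coe (k : ℕ) (i : Fin n) :
    ((mpOrbit A x0 (k + 1) i : ℝ) : WithBot ℝ) =
      Finset.univ.sup fun j => A i j + ((mpOrbit A x0 k j : ℝ) : WithBot ℝ) := by
  haveI : Nonempty (Fin n) := Fin.pos_iff_nonempty.mp hn
  obtain ⟨j1, hj1⟩ := hA i
  have hsup : (Finset.univ.sup fun j => A i j + ((mpOrbit A x0 k j : ℝ) : WithBot ℝ)) ≠ ⊥ := by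
    intro hb
    have hle := Finset.le_sup (f := fun j => A i j + ((mpOrbit A x0 k j : ℝ) : WithBot ℝ))
      (Finset.mem_univ j1)
    rw [hb, le_bot_iff] at hle
    exact (WithBot.add_ne_bot.mpr ⟨hj1, WithBot.coe_ne_bot⟩) hle
  obtain ⟨r, hr⟩ := WithBot.ne_bot_iff_exists.mp hsup
  have : mpOrbit A x0 (k + 1) i = r := by
    simp only [mpOrbit, ← hr, WithBot.unbotD_coe]
  rw [this, hr]

lemma mpOrbit_le_succ (k : ℕ) (i j : Fin n) :
    A i j + ((mpOrbit A x0 k j : ℝ) : WithBot ℝ) ≤ ((mpOrbit A x0 (k + 1) i : ℝ) : WithBot ℝ) := by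
  rw [mpOrbit_succ_coe hn A hA x0 k i]
  exact Finset.le_sup (f := fun j => A i j + ((mpOrbit A x0 k j : ℝ) : WithBot ℝ))
    (Finset.mem_univ j)

lemma mpOrbit_exists_argmax (k : ℕ) (i : Fin n) :
    ∃ j, ((mpOrbit A x0 (k + 1) i : ℝ) : WithBot ℝ) =
      A i j + ((mpOrbit A x0 k j : ℝ) : WithBot ℝ) := by
  haveI : Nonempty (Fin n) := Fin.pos_iff_nonempty.mp hn
  obtain ⟨j, -, hj⟩ := Finset.exists_mem_eq_sup Finset.univ Finset.univ_nonempty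
    (fun j => A i j + ((mpOrbit A x0 k j : ℝ) : WithBot ℝ))
  exact ⟨j, by rw [mpOrbit_succ_coe hn A hA x0 k i, hj]⟩

end Aux

/-- An orbit of a regular max-plus matrix is a lasso iff its initial vector
admits a local transient and cyclicity (with rate `λ(A)`). -/
theorem lasso_iff_local_transient {n : ℕ} (hn : 1 ≤ n)
    (A : Matrix (Fin n) (Fin n) (WithBot ℝ)) (hA : MPRegular A)
    (lam : ℝ) (hlam : IsMaxCycleMean A lam) (x0 : Fin n → ℝ) :
    (∃ α : ℝ, ∃ k l : ℕ, l ≤ k ∧ ∀ (j : ℕ) (i : Fin n),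
        mpOrbit A x0 (k + 1 + j) i = α + mpOrbit A x0 (l + j) i) ↔
    (∃ l c : ℕ, 1 ≤ c ∧ ∀ j : ℕ, l ≤ j → ∀ i : Fin n,
        mpOrbit A x0 (j + c) i = lam * (c : ℝ) + mpOrbit A x0 j i) := by
  set x := mpOrbit A x0 with hx
  constructor
  · rintro ⟨α, k, l, hlk, H⟩
    set c := k + 1 - l with hcdef
    have hc1 : 1 ≤ c := by omega
    -- one-period shift
    have per : ∀ t, l ≤ t → ∀ i, x (t + c) i = α + x t i := by
      intro t ht i
      have h1 : t + c = k + 1 + (t - l) := by omega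
      have h2 : l + (t - l) = t := by omega
      rw [h1, H (t - l) i, h2]
    -- iterated shift
    have periter : ∀ s t, l ≤ t → ∀ i, x (t + c * s) i = (s : ℝ) * α + x t i := by
      intro s
      induction s with
      | zero => intro t ht i; simp
      | succ s ih =>
        intro t ht i
        have h1 : t + c * (s + 1) = (t + c * s) + c := by ring
        rw [h1, per (t + c * s) (le_trans ht (Nat.le_add_right _ _)) i, ih t ht i]
        push_cast; ring
    -- Step 1: lam * c ≤ α, using a maximizing cycle as lower bound on growth.
    obtain ⟨m, hm1, p, w, hpm, hw, hlamdef⟩ := hlam.1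
    have hm0 : (m : ℝ) ≠ 0 := by exact_mod_cast Nat.one_le_iff_ne_zero.mp hm1
    have hsum : ∑ t ∈ Finset.range m, w t = lam * m := by
      rw [hlamdef, div_mul_cancel₀ _ hm0]
    have low : ∀ t s, s ≤ m →
        (∑ u ∈ Finset.range s, w u) + x t (p 0) ≤ x (t + s) (p s) := by
      intro t s
      induction s with
      | zero => intro _; simp
      | succ s ih =>
        intro hs
        have hih := ih (Nat.le_of_succ_le hs)
        have hstep := mpOrbit_le_succ hn A hA x0 (t + s) (p (s + 1)) (p s)
        rw [hw s (by omega)] at hstep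
        rw [← WithBot.coe_add, WithBot.coe_le_coe] at hstep
        rw [Finset.sum_range_succ]
        have h1 : t + (s + 1) = (t + s) + 1 := by omega
        rw [h1]
        have hstep' : w s + x (t + s) (p s) ≤ x (t + s + 1) (p (s + 1)) := hstep
        linarith
    have full : ∀ t, lam * m + x t (p 0) ≤ x (t + m) (p 0) := by
      intro t
      have h := low t m le_rfl
      rw [hsum, hpm] at h
      exact h
    have fulliter : ∀ N t, lam * m * N + x t (p 0) ≤ x (t + m * N) (p 0) := by
      intro N
      induction N with
      | zero => intro t; simp
      | succ N ih =>
        intro t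
        have h1 : t + m * (N + 1) = (t + m * N) + m := by ring
        have h2 := full (t + m * N)
        have h3 := ih t
        rw [h1]
        push_cast
        push_cast at h3
        linarith
    have key1 : lam * c ≤ α := by
      have hA1 := fulliter c l
      have hA2 := periter m l le_rfl (p 0)
      have h3 : l + m * c = l + c * m := by ring
      rw [h3, hA2] at hA1
      have hmpos : (1 : ℝ) ≤ (m : ℝ) := by exact_mod_cast hm1
      nlinarith [hA1, hmpos]
    -- Step 2: α ≤ lam * c, via a backward argmax path and pigeonhole.
    set T := l + c * n with hT
    have hargmax : ∀ k i, ∃ j, ((x (k + 1) i : ℝ) : WithBot ℝ)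
        = A i j + ((x k j : ℝ) : WithBot ℝ) := mpOrbit_exists_argmax hn A hA x0
    let q : ℕ → Fin n := fun s => Nat.rec (⟨0, hn⟩ : Fin n)
      (fun s' prev => Classical.choose (hargmax (T - s' - 1) prev)) s
    have hq : ∀ s, ((x (T - s - 1 + 1) (q s) : ℝ) : WithBot ℝ)
        = A (q s) (q (s + 1)) + ((x (T - s - 1) (q (s + 1)) : ℝ) : WithBot ℝ) :=
      fun s => Classical.choose_spec (hargmax (T - s - 1) (q s))
    let wq : ℕ → ℝ := fun s => WithBot.unbotD 0 (A (q s) (q (s + 1)))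
    have hstep : ∀ s, s + 1 ≤ T →
        A (q s) (q (s + 1)) = ((wq s : ℝ) : WithBot ℝ) ∧
        x (T - s) (q s) = wq s + x (T - s - 1) (q (s + 1)) := by
      intro s hs
      have h0 : T - s - 1 + 1 = T - s := by omega
      have h1 := hq s
      rw [h0] at h1
      have hAne : A (q s) (q (s + 1)) ≠ ⊥ := by
        intro hb
        rw [hb] at h1
        simp at h1
      obtain ⟨r, hr⟩ := WithBot.ne_bot_iff_exists.mp hAne
      have hwq : wq s = r := by simp only [wq, ← hr, WithBot.unbotD_coe]
      rw [← hr, ← WithBot.coe_add, WithBot.coe_inj] at h1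
      exact ⟨by rw [hwq]; exact hr.symm, by rw [hwq]; exact h1⟩
    have tel : ∀ s, s ≤ T →
        x T (q 0) = (∑ u ∈ Finset.range s, wq u) + x (T - s) (q s) := by
      intro s
      induction s with
      | zero => intro _; simp
      | succ s ih =>
        intro hs
        have h1 := ih (by omega)
        have h2 := (hstep s hs).2
        have h3 : T - (s + 1) = T - s - 1 := by omega
        rw [Finset.sum_range_succ, h3, h1, h2]
        ring
    -- pigeonhole: two equal nodes at times that differ by a multiple of c
    obtain ⟨n1, n2, d, hd1, hn2def, hn2T, hq12⟩ :
        ∃ n1 n2 d : ℕ, 1 ≤ d ∧ n2 = n1 + c * d ∧ n2 + l ≤ T ∧ q n1 = q n2 := by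
      obtain ⟨a, b, hab, hfab⟩ := Fintype.exists_ne_map_eq_of_card_lt
        (fun m : Fin (n + 1) => q (c * (m : ℕ))) (by simp)
      have key : ∀ a b : Fin (n + 1), (a : ℕ) < (b : ℕ) →
          q (c * (a : ℕ)) = q (c * (b : ℕ)) →
          ∃ n1 n2 d : ℕ, 1 ≤ d ∧ n2 = n1 + c * d ∧ n2 + l ≤ T ∧ q n1 = q n2 := by
        intro a b h hq'
        refine ⟨c * (a : ℕ), c * (b : ℕ), (b : ℕ) - (a : ℕ), by omega, ?_, ?_, hq'⟩
        · rw [← Nat.mul_add]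
          congr 1
          omega
        · have h1 : c * (b : ℕ) ≤ c * n :=
            Nat.mul_le_mul_left c (Nat.lt_succ_iff.mp b.isLt)
          omega
      rcases lt_or_gt_of_ne hab with h | h
      · exact key a b h hfab
      · exact key b a h hfab.symm
    have hE1 : 1 ≤ c * d := by
      calc 1 = 1 * 1 := by norm_num
      _ ≤ c * d := Nat.mul_le_mul hc1 hd1
    have hn12 : n1 < n2 := by omega
    set L := n2 - n1 with hLdef
    have hL1 : 1 ≤ L := by omega
    have hLcd : L = c * d := by omega
    -- the closed walk (reversed backward path) witnesses cycle mean α / c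
    have hcm : IsCycleMean A (α / c) := by
      refine ⟨L, hL1, fun t => q (n2 - t), fun t => wq (n2 - t - 1), ?_, ?_, ?_⟩
      · show q (n2 - L) = q (n2 - 0)
        have h1 : n2 - L = n1 := by omega
        have h2 : n2 - 0 = n2 := by omega
        rw [h1, h2]
        exact hq12
      · intro t ht
        show A (q (n2 - (t + 1))) (q (n2 - t)) = ((wq (n2 - t - 1) : ℝ) : WithBot ℝ)
        have hs1 : (n2 - t - 1) + 1 = n2 - t := by omega
        have hedge := (hstep (n2 - t - 1) (by omega)).1
        have h2 : n2 - (t + 1) = n2 - t - 1 := by omega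
        rw [h2, ← hs1]
        exact hedge
      · show α / (c : ℝ) = (∑ t ∈ Finset.range L, wq (n2 - t - 1)) / (L : ℝ)
        have hrev : ∑ t ∈ Finset.range L, wq (n2 - t - 1)
            = ∑ t ∈ Finset.range L, wq (n1 + t) := by
          rw [← Finset.sum_range_reflect (fun t => wq (n1 + t)) L]
          refine Finset.sum_congr rfl fun t ht => ?_
          congr 1
          have ht' := Finset.mem_range.mp ht
          omega
        have hsplit : ∑ t ∈ Finset.range L, wq (n1 + t)
            = ∑ u ∈ Finset.range n2, wq u - ∑ u ∈ Finset.range n1, wq u := by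
          have h1 : ∑ t ∈ Finset.range L, wq (n1 + t)
              = ∑ u ∈ Finset.Ico n1 n2, wq u := by
            rw [Finset.sum_Ico_eq_sum_range wq n1 n2]
          have h2 : ∑ u ∈ Finset.range n1, wq u + ∑ u ∈ Finset.Ico n1 n2, wq u
              = ∑ u ∈ Finset.range n2, wq u := by
            rw [Finset.range_eq_Ico, Finset.range_eq_Ico]
            exact Finset.sum_Ico_consecutive wq (Nat.zero_le n1) hn12.le
          rw [h1]
          linarith
        have htel1 := tel n1 (by omega)
        have htel2 := tel n2 (by omega)
        have hperiod : x (T - n1) (q n1) = (d : ℝ) * α + x (T - n2) (q n2) := by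
          have h1 : T - n1 = (T - n2) + c * d := by omega
          have h2 := periter d (T - n2) (by omega) (q n1)
          rw [h1, h2, hq12]
        have hsumval : ∑ t ∈ Finset.range L, wq (n2 - t - 1) = (d : ℝ) * α := by
          rw [hrev, hsplit]
          linarith
        rw [hsumval]
        have hc0 : (c : ℝ) ≠ 0 := by exact_mod_cast Nat.one_le_iff_ne_zero.mp hc1
        have hd0 : (d : ℝ) ≠ 0 := by exact_mod_cast Nat.one_le_iff_ne_zero.mp hd1
        have hLR : (L : ℝ) = (c : ℝ) * (d : ℝ) := by exact_mod_cast hLcd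
        rw [hLR]
        field_simp
    have key2 : α ≤ lam * c := by
      have h := hlam.2 _ hcm
      have hcpos : (0 : ℝ) < (c : ℝ) := by exact_mod_cast hc1
      rw [div_le_iff₀ hcpos] at h
      exact h
    have hαeq : α = lam * c := le_antisymm key2 key1
    exact ⟨l, c, hc1, fun j hj i => by rw [per j hj i, hαeq]⟩
  · rintro ⟨l, c, hc1, H⟩
    refine ⟨lam * (c : ℝ), l + c - 1, l, by omega, fun j i => ?_⟩
    have h1 : l + c - 1 + 1 + j = (l + j) + c := by omega
    rw [h1, H (l + j) (Nat.le_add_right _ _) i]
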